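/- Let k satisfy ⌊n/2⌋ ≤ k ≤ n−1, let ψ : {1,…,n} → ℂ and let P be the homogeneous operator of degree k associated to ψ. Then P is a Rota–Baxter operator of weight 1, i.e. P(x)·P(y) = P(x·P(y) + P(x)·y + x·y) for all x, y ∈ A, if and only if ψ(i) = 0 for all 2 ≤ i ≤ n (the value ψ(1) being arbitrary). -/
import Mathlib


open Finset

/-- Coordinate space of the `n`-dimensional complex null-filiform associative algebra,
with respect to the basis `e_1, …, e_n` (coordinate `m : Fin n` corresponds to `e_{m+1}`). -/
abbrev NF (n : ℕ) : Type := Fin n → ℂ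

/-- Multiplication of the null-filiform algebra: `e_i · e_j = e_{i+j}` if `i + j ≤ n`
and `e_i · e_j = 0` if `i + j > n`, extended bilinearly. -/
noncomputable def nfMul {n : ℕ} (x y : NF n) : NF n :=
  fun m => ∑ i : Fin n, ∑ j : Fin n,
    if (i : ℕ) + (j : ℕ) + 1 = (m : ℕ) then x i * y j else 0

/-- The basis element `e_k`, for `1 ≤ k ≤ n` (it is `0` if `k = 0` or `k > n`). -/
noncomputable def nfE (n k : ℕ) : NF n := fun m => if (m : ℕ) + 1 = k then 1 else 0

/-- The `k`-th power (for `k ≥ 1`) of an element of the null-filiform algebra. -/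
noncomputable def nfPow {n : ℕ} (x : NF n) : ℕ → NF n
  | 0 => 0
  | 1 => x
  | k + 2 => nfMul (nfPow x (k + 1)) x

lemma nfE_big {n c : ℕ} (h : n < c) : nfE n c = 0 := by
  funext m; have hm := m.isLt
  simp only [nfE, Pi.zero_apply, ite_eq_right_iff]
  intro h'; exfalso; omega

lemma nfMul_smul_left {n : ℕ} (c : ℂ) (x y : NF n) : nfMul (c • x) y = c • nfMul x y := by
  funext m
  simp only [nfMul, Pi.smul_apply, smul_eq_mul, Finset.mul_sum]
  refine Finset.sum_congr rfl fun i _ => Finset.sum_congr rfl fun j _ => ?_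
  split_ifs <;> ring

lemma nfMul_smul_right {n : ℕ} (c : ℂ) (x y : NF n) : nfMul x (c • y) = c • nfMul x y := by
  funext m
  simp only [nfMul, Pi.smul_apply, smul_eq_mul, Finset.mul_sum]
  refine Finset.sum_congr rfl fun i _ => Finset.sum_congr rfl fun j _ => ?_
  split_ifs <;> ring

lemma nfMul_E {n a b : ℕ} (ha : 1 ≤ a) (hb : 1 ≤ b) :
    nfMul (nfE n a) (nfE n b) = nfE n (a + b) := by
  funext m
  have hm := m.isLt
  simp only [nfMul, nfE]
  by_cases han : a ≤ n
  · by_cases hbn : b ≤ n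
    · rw [Finset.sum_eq_single (⟨a-1, by omega⟩ : Fin n)]
      · rw [Finset.sum_eq_single (⟨b-1, by omega⟩ : Fin n)]
        · simp only []
          split_ifs <;> (first | ring1 | (exfalso; omega))
        · intro j _ hj
          have hj' : (j : ℕ) ≠ b - 1 := fun h => hj (Fin.ext (by simpa using h))
          split_ifs <;> (first | ring1 | (exfalso; omega))
        · intro h; exact absurd (Finset.mem_univ _) h
      · intro i _ hi
        have hi' : (i : ℕ) ≠ a - 1 := fun h => hi (Fin.ext (by simpa using h))
        apply Finset.sum_eq_zero
        intro j _
        split_ifs <;> (first | ring1 | (exfalso; omega))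
      · intro h; exact absurd (Finset.mem_univ _) h
    · rw [Finset.sum_eq_zero, eq_comm, ite_eq_right_iff]
      · intro h; exfalso; omega
      · intro i _; apply Finset.sum_eq_zero; intro j _
        have hj := j.isLt
        split_ifs <;> (first | ring1 | (exfalso; omega))
  · rw [Finset.sum_eq_zero, eq_comm, ite_eq_right_iff]
    · intro h; exfalso; omega
    · intro i _; apply Finset.sum_eq_zero; intro j _
      have hi := i.isLt
      split_ifs <;> (first | ring1 | (exfalso; omega))

lemma PE {n k : ℕ} {ψ : ℕ → ℂ} {P : NF n →ₗ[ℂ] NF n}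
    (hP : ∀ i, 1 ≤ i → i ≤ n →
      P (nfE n i) = ψ i • nfE n (if i + k ≤ n then i + k else i + k - n))
    (c : ℕ) (hc : 1 ≤ c) :
    P (nfE n c) = (if c ≤ n then ψ c else 0) • nfE n (if c + k ≤ n then c + k else c + k - n) := by
  by_cases h : c ≤ n
  · rw [hP c hc h, if_pos h]
  · rw [if_neg h, zero_smul, nfE_big (by omega), map_zero]

set_option maxHeartbeats 1000000 in
lemma aux_forward (n k : ℕ) (hk1 : n / 2 ≤ k) (hk2 : k ≤ n - 1)
    (ψ : ℕ → ℂ) (P : NF n →ₗ[ℂ] NF n)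
    (hP : ∀ i, 1 ≤ i → i ≤ n →
      P (nfE n i) = ψ i • nfE n (if i + k ≤ n then i + k else i + k - n))
    (hRB : ∀ x y : NF n,
      nfMul (P x) (P y) = P (nfMul x (P y) + nfMul (P x) y + nfMul x y))
    (m : ℕ) (hm2 : 2 ≤ m) (hmn : m ≤ n) : ψ m = 0 := by
  have hn2 : 2 ≤ n := le_trans hm2 hmn
  have hk1' : 1 ≤ k := by omega
  have hkn : k + 1 ≤ n := by omega
  have h2k : n ≤ 2 * k + 1 := by omega
  obtain ⟨a, rfl⟩ : ∃ a, m = a + 1 := ⟨m - 1, by omega⟩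
  have ha1 : 1 ≤ a := by omega
  -- σ(a)
  obtain ⟨s, hs⟩ : ∃ s, ((a + k ≤ n ∧ s = a + k) ∨ (n < a + k ∧ s = a + k - n)) := by
    by_cases h : a + k ≤ n
    · exact ⟨a + k, Or.inl ⟨h, rfl⟩⟩
    · exact ⟨a + k - n, Or.inr ⟨by omega, rfl⟩⟩
  have hs1 : 1 ≤ s := by omega
  have hsn : s ≤ n := by omega
  have hifs : (if a + k ≤ n then a + k else a + k - n) = s := by split_ifs <;> omega
  -- σ(a+1)
  obtain ⟨t, ht⟩ : ∃ t, ((a + 1 + k ≤ n ∧ t = a + 1 + k) ∨ (n < a + 1 + k ∧ t = a + 1 + k - n)) := by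
    by_cases h : a + 1 + k ≤ n
    · exact ⟨a + 1 + k, Or.inl ⟨h, rfl⟩⟩
    · exact ⟨a + 1 + k - n, Or.inr ⟨by omega, rfl⟩⟩
  have ht1 : 1 ≤ t := by omega
  have htn : t ≤ n := by omega
  have hift : (if a + 1 + k ≤ n then a + 1 + k else a + 1 + k - n) = t := by split_ifs <;> omega
  have E := hRB (nfE n 1) (nfE n a)
  rw [hP 1 le_rfl (by omega), hP a ha1 (by omega), if_pos (show 1 + k ≤ n by omega), hifs] at E
  simp only [nfMul_smul_left, nfMul_smul_right] at E
  rw [nfMul_E (show 1 ≤ 1 + k by omega) hs1, nfMul_E le_rfl hs1,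
      nfMul_E (show 1 ≤ 1 + k by omega) ha1, nfMul_E le_rfl ha1] at E
  rw [show 1 + a = a + 1 by omega] at E
  rw [map_add, map_add, map_smul, map_smul,
      PE hP (1 + s) (by omega), PE hP (1 + k + a) (by omega),
      hP (a + 1) (by omega) (by omega), hift] at E
  obtain ⟨c0, hc0⟩ : ∃ c0 : Fin n, (c0 : ℕ) = t - 1 := ⟨⟨t - 1, by omega⟩, rfl⟩
  have E' := congrFun E c0
  simp only [Pi.add_apply, Pi.smul_apply, smul_eq_mul, nfE] at E'
  split_ifs at E' <;> (first | omega | (simp only [mul_zero, mul_one, zero_add, add_zero, zero_mul] at E' ⊢; exact E'.symm))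

set_option maxHeartbeats 1000000 in
lemma aux_backward (n k : ℕ) (hk1 : n / 2 ≤ k) (hk2 : k ≤ n - 1)
    (ψ : ℕ → ℂ) (P : NF n →ₗ[ℂ] NF n)
    (hP : ∀ i, 1 ≤ i → i ≤ n →
      P (nfE n i) = ψ i • nfE n (if i + k ≤ n then i + k else i + k - n))
    (hψ : ∀ i, 2 ≤ i → i ≤ n → ψ i = 0) (x y : NF n) :
    nfMul (P x) (P y) = P (nfMul x (P y) + nfMul (P x) y + nfMul x y) := by
  rcases Nat.eq_zero_or_pos n with hn | hn
  · subst hn; funext m; exact m.elim0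
  have hkn : k + 1 ≤ n := by omega
  have hPv : ∀ v : NF n, P v = (v ⟨0, hn⟩ * ψ 1) • nfE n (k + 1) := by
    intro v
    have hv : v = ∑ i : Fin n, v i • nfE n ((i : ℕ) + 1) := by
      funext m
      rw [Finset.sum_apply, Finset.sum_eq_single m]
      · simp [nfE]
      · intro i _ him
        simp only [Pi.smul_apply, nfE, smul_eq_mul]
        rw [if_neg, mul_zero]
        exact fun h => him (Fin.ext (by omega))
      · intro h; exact absurd (Finset.mem_univ _) h
    conv_lhs => rw [hv, map_sum]
    simp only [map_smul]
    rw [Finset.sum_eq_single (⟨0, hn⟩ : Fin n)]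
    · rw [hP 1 le_rfl (by omega), if_pos (by omega : 1 + k ≤ n), smul_smul,
        show 1 + k = k + 1 by omega]
    · intro i _ hi
      have hi0 : 1 ≤ (i : ℕ) := by
        rcases Nat.eq_zero_or_pos (i : ℕ) with h | h
        · exact absurd (Fin.ext (by simp [h])) hi
        · exact h
      have := i.isLt
      rw [hP ((i : ℕ) + 1) (by omega) (by omega), hψ ((i : ℕ) + 1) (by omega) (by omega),
        zero_smul, smul_zero]
    · intro h; exact absurd (Finset.mem_univ _) h
  have hz : ∀ u w : NF n, nfMul u w ⟨0, hn⟩ = 0 := by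
    intro u w
    simp only [nfMul]
    apply Finset.sum_eq_zero; intro i _
    apply Finset.sum_eq_zero; intro j _
    refine if_neg fun h => ?_
    have h0 : ((⟨0, hn⟩ : Fin n) : ℕ) = 0 := rfl
    omega
  rw [hPv x, hPv y]
  conv_rhs => rw [hPv]
  rw [nfMul_smul_left, nfMul_smul_right, nfMul_E (by omega) (by omega),
    nfE_big (show n < (k + 1) + (k + 1) by omega), smul_zero, smul_zero]
  simp only [Pi.add_apply, hz, add_zero, zero_mul, zero_smul]

/-- For `⌊n/2⌋ ≤ k ≤ n−1`, the homogeneous operator of degree `k` associated to `ψ`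
is a Rota–Baxter operator of weight `1` iff `ψ(i) = 0` for all `2 ≤ i ≤ n`. -/
theorem rota_baxter_weight1_large_degree (n k : ℕ) (hk1 : n / 2 ≤ k) (hk2 : k ≤ n - 1)
    (ψ : ℕ → ℂ) (P : NF n →ₗ[ℂ] NF n)
    (hP : ∀ i, 1 ≤ i → i ≤ n →
      P (nfE n i) = ψ i • nfE n (if i + k ≤ n then i + k else i + k - n)) :
    (∀ x y : NF n,
      nfMul (P x) (P y) = P (nfMul x (P y) + nfMul (P x) y + nfMul x y)) ↔
      (∀ i, 2 ≤ i → i ≤ n → ψ i = 0) :=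
  ⟨fun hRB m hm2 hmn => aux_forward n k hk1 hk2 ψ P hP hRB m hm2 hmn,
   fun hψ x y => aux_backward n k hk1 hk2 ψ P hP hψ x y⟩
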